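/- Suppose φ ∈ L^∞(𝕋) is unimodular. If there exists ψ ∈ 𝔄 with ‖φ − ψ‖_∞ < 1, then for every α ∈ 𝔹² the operator T^α_{conj(φ)} T^α_ψ is invertible, and hence T^α_φ is left invertible. If moreover ψ is invertible in 𝔄, then T^α_{conj(ψ)} T^α_φ is invertible and T^α_φ is invertible, for every α ∈ 𝔹². -/

import Mathlib

open MeasureTheory Complex AddCircle
open scoped ENNReal

noncomputable section

instance fact_two_pi_pos : Fact (0 < 2 * Real.pi) := ⟨by positivity⟩

/-- The unit circle `𝕋`, realized as `ℝ / 2πℤ`. -/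
abbrev CircleT : Type := AddCircle (2 * Real.pi)

/-- Normalized arc-length measure `dt/2π` on the circle. -/
abbrev hm : Measure CircleT := haarAddCircle

/-- The `n`-th Fourier coefficient of an `L²` function on the circle. -/
def hat2 (f : Lp ℂ 2 hm) (n : ℤ) : ℂ := fourierBasis.repr f n

lemma hat2_eq_inner (f : Lp ℂ 2 hm) (n : ℤ) :
    hat2 f n = @inner ℂ _ _ ((fourierBasis (T := 2 * Real.pi)) n) f :=
  fourierBasis.repr_apply_apply f n

lemma continuous_hat2 (n : ℤ) : Continuous fun f : Lp ℂ 2 hm => hat2 f n := by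
  simp only [hat2_eq_inner]
  exact continuous_const.inner continuous_id

@[simp] lemma hat2_add (f g : Lp ℂ 2 hm) (n : ℤ) :
    hat2 (f + g) n = hat2 f n + hat2 g n := by
  simp [hat2, map_add]

@[simp] lemma hat2_smul (c : ℂ) (f : Lp ℂ 2 hm) (n : ℤ) :
    hat2 (c • f) n = c * hat2 f n := by
  simp [hat2, _root_.map_smul]

@[simp] lemma hat2_zero (n : ℤ) : hat2 0 n = 0 := by simp [hat2]

/-- The Hardy space `H² ⊂ L²`: vanishing negative Fourier coefficients. -/
def Hardy2 : Submodule ℂ (Lp ℂ 2 hm) where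
  carrier := {f | ∀ n : ℤ, n < 0 → hat2 f n = 0}
  add_mem' := fun hf hg n hn => by simp [hf n hn, hg n hn]
  zero_mem' := fun n _ => hat2_zero n
  smul_mem' := fun c f hf n hn => by simp [hf n hn]

/-- The subspace `z²H² ⊂ H²`: Fourier coefficients vanish below index 2. -/
def Hardy20 : Submodule ℂ (Lp ℂ 2 hm) where
  carrier := {f | ∀ n : ℤ, n < 2 → hat2 f n = 0}
  add_mem' := fun hf hg n hn => by simp [hf n hn, hg n hn]
  zero_mem' := fun n _ => hat2_zero n
  smul_mem' := fun c f hf n hn => by simp [hf n hn]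

/-- The unit sphere `𝔹² = {(a,b) ∈ ℂ² : |a|² + |b|² = 1}`. -/
def B2 : Set (ℂ × ℂ) := {α | ‖α.1‖ ^ 2 + ‖α.2‖ ^ 2 = 1}

/-- The space `H²_α = {f ∈ H² : b·f(0) = a·f'(0)}` for `α = (a,b)`; here `f(0) = f̂(0)` and
`f'(0) = f̂(1)`. -/
def HardyA (α : ℂ × ℂ) : Submodule ℂ (Lp ℂ 2 hm) where
  carrier := {f | (∀ n : ℤ, n < 0 → hat2 f n = 0) ∧ α.2 * hat2 f 0 = α.1 * hat2 f 1}
  add_mem' := fun hf hg =>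
    ⟨fun n hn => by simp [hf.1 n hn, hg.1 n hn],
     by simp only [hat2_add, mul_add, hf.2, hg.2]⟩
  zero_mem' := ⟨fun n _ => hat2_zero n, by simp⟩
  smul_mem' := fun c f hf =>
    ⟨fun n hn => by simp [hf.1 n hn],
     by simp only [hat2_smul, mul_left_comm, hf.2]⟩

lemma isClosed_vanishing (s : Set ℤ) :
    IsClosed {f : Lp ℂ 2 hm | ∀ n ∈ s, hat2 f n = 0} := by
  have : {f : Lp ℂ 2 hm | ∀ n ∈ s, hat2 f n = 0}
      = ⋂ (n : ℤ) (_ : n ∈ s), {f | hat2 f n = 0} := by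
    ext f; simp
  rw [this]
  exact isClosed_iInter fun n => isClosed_iInter fun _ =>
    isClosed_eq (continuous_hat2 n) continuous_const

lemma isClosed_Hardy2 : IsClosed (Hardy2 : Set (Lp ℂ 2 hm)) := by
  have := isClosed_vanishing {n : ℤ | n < 0}
  simpa [Hardy2] using this

lemma isClosed_Hardy20 : IsClosed (Hardy20 : Set (Lp ℂ 2 hm)) := by
  have := isClosed_vanishing {n : ℤ | n < 2}
  simpa [Hardy20] using this

lemma isClosed_HardyA (α : ℂ × ℂ) : IsClosed (HardyA α : Set (Lp ℂ 2 hm)) := by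
  have h1 := isClosed_vanishing {n : ℤ | n < 0}
  have h2 : IsClosed {f : Lp ℂ 2 hm | α.2 * hat2 f 0 = α.1 * hat2 f 1} :=
    isClosed_eq (continuous_const.mul (continuous_hat2 0))
      (continuous_const.mul (continuous_hat2 1))
  have : (HardyA α : Set (Lp ℂ 2 hm))
      = {f : Lp ℂ 2 hm | ∀ n ∈ {n : ℤ | n < 0}, hat2 f n = 0}
        ∩ {f : Lp ℂ 2 hm | α.2 * hat2 f 0 = α.1 * hat2 f 1} := by
    ext f; simp [HardyA, Set.mem_setOf_eq]
  rw [this]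
  exact h1.inter h2

instance : CompleteSpace Hardy2 := isClosed_Hardy2.completeSpace_coe
instance : CompleteSpace Hardy20 := isClosed_Hardy20.completeSpace_coe
instance (α : ℂ × ℂ) : CompleteSpace (HardyA α) := (isClosed_HardyA α).completeSpace_coe

/-- Multiplication of an `L²` function by an `L^∞` function, as an element of `L²`. -/
def mulFun (φ : Lp ℂ ∞ hm) (f : Lp ℂ 2 hm) : Lp ℂ 2 hm :=
  ((Lp.memLp f).smul (r := 2) (Lp.memLp φ)).toLp (⇑φ • ⇑f)

lemma coeFn_mulFun (φ : Lp ℂ ∞ hm) (f : Lp ℂ 2 hm) :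
    mulFun φ f =ᵐ[hm] fun t => φ t * f t := by
  filter_upwards [MemLp.coeFn_toLp ((Lp.memLp f).smul (r := 2) (Lp.memLp φ))] with t ht
  simpa [mulFun, Pi.smul_apply', smul_eq_mul] using ht
lemma mulFun_add' (φ : Lp ℂ ∞ hm) (f g : Lp ℂ 2 hm) :
    mulFun φ (f + g) = mulFun φ f + mulFun φ g := by
  apply Lp.ext
  filter_upwards [coeFn_mulFun φ (f + g), coeFn_mulFun φ f, coeFn_mulFun φ g,
    Lp.coeFn_add f g, Lp.coeFn_add (mulFun φ f) (mulFun φ g)] with t h1 h2 h3 h4 h5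
  simp only [h5, Pi.add_apply, h1, h2, h3, h4]
  ring

lemma mulFun_smul' (φ : Lp ℂ ∞ hm) (c : ℂ) (f : Lp ℂ 2 hm) :
    mulFun φ (c • f) = c • mulFun φ f := by
  apply Lp.ext
  filter_upwards [coeFn_mulFun φ (c • f), coeFn_mulFun φ f,
    Lp.coeFn_smul c f, Lp.coeFn_smul c (mulFun φ f)] with t h1 h2 h3 h4
  simp only [h4, Pi.smul_apply, h1, h2, h3, smul_eq_mul]
  ring

lemma norm_mulFun_le (φ : Lp ℂ ∞ hm) (f : Lp ℂ 2 hm) : ‖mulFun φ f‖ ≤ ‖φ‖ * ‖f‖ := by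
  rw [mulFun, Lp.norm_toLp]
  have h := eLpNorm_smul_le_eLpNorm_top_mul_eLpNorm (μ := hm) 2 (Lp.aestronglyMeasurable f) ⇑φ
  calc (eLpNorm (⇑φ • ⇑f) 2 hm).toReal
      ≤ ((eLpNorm (⇑φ) ∞ hm) * eLpNorm (⇑f) 2 hm).toReal := by
        apply ENNReal.toReal_mono _ h
        exact ENNReal.mul_ne_top (Lp.eLpNorm_ne_top φ) (Lp.eLpNorm_ne_top f)
    _ = ‖φ‖ * ‖f‖ := by rw [ENNReal.toReal_mul, Lp.norm_def, Lp.norm_def]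

/-- Multiplication by an `L^∞` function, as a bounded operator on `L²`. -/
def mul2 (φ : Lp ℂ ∞ hm) : Lp ℂ 2 hm →L[ℂ] Lp ℂ 2 hm :=
  LinearMap.mkContinuous
    { toFun := mulFun φ
      map_add' := mulFun_add' φ
      map_smul' := mulFun_smul' φ }
    ‖φ‖ (norm_mulFun_le φ)

lemma coeFn_mul2 (φ : Lp ℂ ∞ hm) (f : Lp ℂ 2 hm) :
    mul2 φ f =ᵐ[hm] fun t => φ t * f t := coeFn_mulFun φ f

/-- The Toeplitz operator `T^α_φ = V_α^* M_φ V_α` on `H²_α`. -/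
def Toeplitz (α : ℂ × ℂ) (φ : Lp ℂ ∞ hm) : HardyA α →L[ℂ] HardyA α :=
  (HardyA α).orthogonalProjectionOnto ∘L (mul2 φ) ∘L (HardyA α).subtypeL

/-- The classical Toeplitz operator `T_φ = V^* M_φ V` on `H²`. -/
def ToeplitzH (φ : Lp ℂ ∞ hm) : Hardy2 →L[ℂ] Hardy2 :=
  Hardy2.orthogonalProjectionOnto ∘L (mul2 φ) ∘L Hardy2.subtypeL

/-- The compression `W^* M_φ W` of multiplication by `φ` to `z²H²`. -/
def Toeplitz20 (φ : Lp ℂ ∞ hm) : Hardy20 →L[ℂ] Hardy20 :=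
  Hardy20.orthogonalProjectionOnto ∘L (mul2 φ) ∘L Hardy20.subtypeL

/-- The `n`-th Fourier coefficient of an `L^∞` function on the circle. -/
def hatInf (φ : Lp ℂ ∞ hm) (n : ℤ) : ℂ := fourierCoeff (⇑φ) n

/-- The Neil algebra `𝔄`, viewed inside `L^∞` via boundary values: the (boundary values of)
bounded analytic functions on the disc whose derivative vanishes at `0`; equivalently, those
`φ ∈ L^∞` whose Fourier coefficients vanish at all negative indices and at index `1`. -/
def NeilSet : Set (Lp ℂ ∞ hm) := {φ | (∀ n : ℤ, n < 0 → hatInf φ n = 0) ∧ hatInf φ 1 = 0}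

/-- `𝔄₀ = z²H^∞`, the functions in the Neil algebra vanishing at `0`. -/
def NeilSet0 : Set (Lp ℂ ∞ hm) := {φ | ∀ n : ℤ, n < 2 → hatInf φ n = 0}

/-- `H^∞`, viewed inside `L^∞` via boundary values. -/
def HinfSet : Set (Lp ℂ ∞ hm) := {φ | ∀ n : ℤ, n < 0 → hatInf φ n = 0}

/-- `φ ∈ L^∞` is unimodular if `|φ| = 1` a.e. -/
def Unimodular (φ : Lp ℂ ∞ hm) : Prop := ∀ᵐ t ∂hm, ‖φ t‖ = 1

/-- The product of two `L^∞` functions. -/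
def mulInf (φ ψ : Lp ℂ ∞ hm) : Lp ℂ ∞ hm :=
  ((Lp.memLp ψ).smul (r := ∞) (Lp.memLp φ)).toLp (⇑φ • ⇑ψ)

lemma coeFn_mulInf (φ ψ : Lp ℂ ∞ hm) :
    mulInf φ ψ =ᵐ[hm] fun t => φ t * ψ t := by
  filter_upwards [MemLp.coeFn_toLp ((Lp.memLp ψ).smul (r := ∞) (Lp.memLp φ))] with t ht
  simpa [mulInf, Pi.smul_apply', smul_eq_mul] using ht

/-- The complex conjugate of an `L^∞` function. -/
def conjInf (φ : Lp ℂ ∞ hm) : Lp ℂ ∞ hm :=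
  (MemLp.of_le (Lp.memLp φ)
      (Complex.continuous_conj.comp_aestronglyMeasurable (Lp.aestronglyMeasurable φ))
      (Filter.Eventually.of_forall fun t => by simp)).toLp
    fun t => (starRingEnd ℂ) (φ t)

lemma coeFn_conjInf (φ : Lp ℂ ∞ hm) :
    conjInf φ =ᵐ[hm] fun t => (starRingEnd ℂ) (φ t) :=
  MemLp.coeFn_toLp _

/-- A bounded operator is left invertible if it has a bounded left inverse. -/
def LeftInvertible {E F : Type*} [NormedAddCommGroup E] [NormedAddCommGroup F]
    [NormedSpace ℂ E] [NormedSpace ℂ F] (T : E →L[ℂ] F) : Prop :=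
  ∃ S : F →L[ℂ] E, S ∘L T = ContinuousLinearMap.id ℂ E

/-- A bounded operator on a space is invertible if it has a bounded two-sided inverse. -/
def InvertibleOp {E : Type*} [NormedAddCommGroup E] [NormedSpace ℂ E] (T : E →L[ℂ] E) : Prop :=
  ∃ S : E →L[ℂ] E, S ∘L T = ContinuousLinearMap.id ℂ E ∧ T ∘L S = ContinuousLinearMap.id ℂ E

/-- The value at `w` in the unit disc of the analytic extension of (an `L²` function in) a Hardy
space, via its Taylor coefficients. -/
def eval2 (f : Lp ℂ 2 hm) (w : ℂ) : ℂ := ∑' n : ℕ, hat2 f n * w ^ n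

/-- The value at `w` in the unit disc of the analytic extension of (an `L^∞` function in) `H^∞`,
via its Taylor coefficients. -/
def evalInf (φ : Lp ℂ ∞ hm) (w : ℂ) : ℂ := ∑' n : ℕ, hatInf φ n * w ^ n

/-- `ψ` is invertible in the Neil algebra. -/
def NeilInvertible (ψ : Lp ℂ ∞ hm) : Prop :=
  ψ ∈ NeilSet ∧ ∃ χ ∈ NeilSet, mulInf ψ χ = Lp.const ∞ hm (1 : ℂ)

/-- The orthogonal projection of `L²` onto `H²_α`, as an operator on `L²`. -/
def projA (α : ℂ × ℂ) : Lp ℂ 2 hm →L[ℂ] Lp ℂ 2 hm :=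
  (HardyA α).subtypeL ∘L (HardyA α).orthogonalProjectionOnto

/-- The subspace `𝓜 ⊂ L¹` of functions whose Fourier coefficients vanish at `0` and at all
indices `≤ -2`. -/
def MM : Set (Lp ℂ 1 hm) :=
  {h | fourierCoeff (⇑h) 0 = 0 ∧ ∀ n : ℤ, n ≤ -2 → fourierCoeff (⇑h) n = 0}
/-- The complex conjugate of an `L²` function. -/
def conj2 (f : Lp ℂ 2 hm) : Lp ℂ 2 hm :=
  (MemLp.of_le (Lp.memLp f)
      (Complex.continuous_conj.comp_aestronglyMeasurable (Lp.aestronglyMeasurable f))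
      (Filter.Eventually.of_forall fun t => by simp)).toLp
    fun t => (starRingEnd ℂ) (f t)

lemma coeFn_conj2 (f : Lp ℂ 2 hm) :
    conj2 f =ᵐ[hm] fun t => (starRingEnd ℂ) (f t) :=
  MemLp.coeFn_toLp _

lemma fourierCoeff_hm_congr {f g : CircleT → ℂ} (h : f =ᵐ[hm] g) (n : ℤ) :
    fourierCoeff f n = fourierCoeff g n := by
  unfold fourierCoeff
  exact integral_congr_ae (by filter_upwards [h] with t ht; rw [ht])

lemma integrable_fourier_smul {f : CircleT → ℂ} (hf : Integrable f hm) (n : ℤ) :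
    Integrable (fun t => (fourier n t : ℂ) • f t) hm := by
  simp_rw [smul_eq_mul]
  exact hf.bdd_mul ((fourier n).continuous.aestronglyMeasurable)
    (c := 1) (Filter.Eventually.of_forall fun t => le_of_eq (Circle.norm_coe _))

lemma fourierCoeff_add_of_integrable {f g : CircleT → ℂ}
    (hf : Integrable f hm) (hg : Integrable g hm) (n : ℤ) :
    fourierCoeff (f + g) n = fourierCoeff f n + fourierCoeff g n := by
  unfold fourierCoeff
  rw [← integral_add (integrable_fourier_smul hf (-n)) (integrable_fourier_smul hg (-n))]
  exact integral_congr_ae (Filter.Eventually.of_forall fun t => by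
    simp only [Pi.add_apply, smul_eq_mul]; ring)

lemma fourierCoeff_smul (c : ℂ) (f : CircleT → ℂ) (n : ℤ) :
    fourierCoeff (c • f) n = c * fourierCoeff f n := by
  unfold fourierCoeff
  have : (∫ t : CircleT, (fourier (-n)) t • (c • f) t ∂hm)
      = ∫ t : CircleT, c • ((fourier (-n)) t • f t) ∂hm := by
    refine integral_congr_ae (Filter.Eventually.of_forall fun t => ?_)
    simp only [Pi.smul_apply, smul_eq_mul]; ring
  rw [this, integral_smul, smul_eq_mul]

/-- `𝓜`, as a subspace of `L¹`. -/
def MMsub : Submodule ℂ (Lp ℂ 1 hm) where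
  carrier := MM
  add_mem' := by
    intro f g hf hg
    have key : ∀ n : ℤ, fourierCoeff (⇑(f + g)) n = fourierCoeff ⇑f n + fourierCoeff ⇑g n := by
      intro n
      rw [fourierCoeff_hm_congr (Lp.coeFn_add f g) n]
      exact fourierCoeff_add_of_integrable (L1.integrable_coeFn f) (L1.integrable_coeFn g) n
    exact ⟨by rw [key 0, hf.1, hg.1, add_zero],
      fun n hn => by rw [key n, hf.2 n hn, hg.2 n hn, add_zero]⟩
  zero_mem' := by
    have key : ∀ n : ℤ, fourierCoeff (⇑(0 : Lp ℂ 1 hm)) n = 0 := by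
      intro n
      rw [fourierCoeff_hm_congr (Lp.coeFn_zero ℂ 1 hm) n]
      simp [fourierCoeff]
    exact ⟨key 0, fun n _ => key n⟩
  smul_mem' := by
    intro c f hf
    have key : ∀ n : ℤ, fourierCoeff (⇑(c • f)) n = c * fourierCoeff ⇑f n := by
      intro n
      rw [fourierCoeff_hm_congr (Lp.coeFn_smul c f) n, ← fourierCoeff_smul c ⇑f n]
    exact ⟨by rw [key 0, hf.1, mul_zero], fun n hn => by rw [key n, hf.2 n hn, mul_zero]⟩

lemma hatInf_add (φ ψ : Lp ℂ ∞ hm) (n : ℤ) :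
    hatInf (φ + ψ) n = hatInf φ n + hatInf ψ n := by
  unfold hatInf
  rw [fourierCoeff_hm_congr (Lp.coeFn_add φ ψ) n]
  exact fourierCoeff_add_of_integrable ((Lp.memLp φ).integrable le_top)
    ((Lp.memLp ψ).integrable le_top) n

lemma hatInf_smul (c : ℂ) (φ : Lp ℂ ∞ hm) (n : ℤ) :
    hatInf (c • φ) n = c * hatInf φ n := by
  unfold hatInf
  rw [fourierCoeff_hm_congr (Lp.coeFn_smul c φ) n, ← fourierCoeff_smul c ⇑φ n]

lemma hatInf_zero (n : ℤ) : hatInf (0 : Lp ℂ ∞ hm) n = 0 := by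
  unfold hatInf
  rw [fourierCoeff_hm_congr (Lp.coeFn_zero ℂ ∞ hm) n]
  simp [fourierCoeff]

/-- The Neil algebra `𝔄`, as a subspace of `L^∞`. -/
def NeilSub : Submodule ℂ (Lp ℂ ∞ hm) where
  carrier := NeilSet
  add_mem' := fun hf hg =>
    ⟨fun n hn => by rw [hatInf_add, hf.1 n hn, hg.1 n hn, add_zero],
      by rw [hatInf_add, hf.2, hg.2, add_zero]⟩
  zero_mem' := ⟨fun n _ => hatInf_zero n, hatInf_zero 1⟩
  smul_mem' := fun c φ hφ =>
    ⟨fun n hn => by rw [hatInf_smul, hφ.1 n hn, mul_zero],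
      by rw [hatInf_smul, hφ.2, mul_zero]⟩

/-!
For `ψ ∈ 𝔄`, multiplication by `ψ` maps `H²_α` into itself, so multiplication by its adjoint
`ψ̄` maps `(H²_α)ᗮ` into itself; hence `T_a T_ψ = T_{aψ}` and `T_{ψ̄} T_b = T_{ψ̄b}`. As `φ` is
unimodular, `|1 - φ̄ψ| = |1 - ψ̄φ| = |φ - ψ|` a.e., so `T_{φ̄} T_ψ = I - T_{1 - φ̄ψ}` and
`T_{ψ̄} T_φ = I - T_{1 - ψ̄φ}` are invertible by a Neumann series, and the latter gives a left
inverse of `T_φ`. If `ψχ = 1` with `χ ∈ 𝔄`, then `T_{χ̄}` inverts `T_{ψ̄}`, so `T_φ` is invertible.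
-/

section Compression

open Module End ContinuousLinearMap

variable {𝕜 E : Type*} [RCLike 𝕜] [NormedAddCommGroup E] [InnerProductSpace 𝕜 E]
  (K : Submodule 𝕜 E) [K.HasOrthogonalProjection]

def Submodule.compression (A : E →L[𝕜] E) : K →L[𝕜] K :=
  K.orthogonalProjectionOnto ∘L A ∘L K.subtypeL

lemma Submodule.compression_apply (A : E →L[𝕜] E) (x : K) :
    K.compression A x = K.orthogonalProjectionOnto (A x) := rfl

lemma Submodule.compression_id : K.compression (.id 𝕜 E) = .id 𝕜 K :=
  ContinuousLinearMap.ext K.orthogonalProjectionOnto_mem_subspace_eq_self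

lemma Submodule.compression_sub (A B : E →L[𝕜] E) :
    K.compression (A - B) = K.compression A - K.compression B := by
  ext x
  simp [compression_apply]

lemma Submodule.norm_compression_le (A : E →L[𝕜] E) : ‖K.compression A‖ ≤ ‖A‖ :=
  opNorm_le_bound _ (norm_nonneg A) fun x =>
    calc ‖K.orthogonalProjectionOnto (A x)‖ ≤ ‖A x‖ := K.norm_orthogonalProjectionOnto_apply_le _
      _ ≤ ‖A‖ * ‖x‖ := A.le_opNorm x

lemma Submodule.compression_comp_of_mem_invtSubmodule {B : E →L[𝕜] E}
    (hB : K ∈ invtSubmodule B.toLinearMap) (A : E →L[𝕜] E) :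
    K.compression A ∘L K.compression B = K.compression (A ∘L B) := by
  ext x
  simp only [comp_apply, compression_apply]
  congr 3
  exact K.starProjection_eq_self_iff.mpr (hB x.2)

lemma Submodule.compression_comp_of_orthogonal_mem_invtSubmodule {A : E →L[𝕜] E}
    (hA : Kᗮ ∈ invtSubmodule A.toLinearMap) (B : E →L[𝕜] E) :
    K.compression A ∘L K.compression B = K.compression (A ∘L B) := by
  ext x
  set y := B x
  have hperp : A (K.starProjection y) - A y ∈ Kᗮ := by
    rw [← map_sub, ← neg_sub, map_neg]
    exact Submodule.neg_mem _ (hA (K.sub_starProjection_mem_orthogonal y))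
  simp only [comp_apply, compression_apply]
  congr 1
  rw [← sub_eq_zero, ← map_sub]
  exact K.orthogonalProjectionOnto_apply_of_mem_orthogonal hperp

end Compression

section Multiplication

lemma mul2_comp_mul2 (a b : Lp ℂ ∞ hm) : mul2 a ∘L mul2 b = mul2 (mulInf a b) := by
  ext1 x
  refine Lp.ext ?_
  filter_upwards [coeFn_mul2 a (mul2 b x), coeFn_mul2 b x, coeFn_mul2 (mulInf a b) x,
    coeFn_mulInf a b] with t h1 h2 h3 h4
  rw [ContinuousLinearMap.comp_apply, h1, h2, h3, h4, mul_assoc]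

lemma mul2_const_one : mul2 (Lp.const ∞ hm (1 : ℂ)) = .id ℂ (Lp ℂ 2 hm) := by
  ext1 x
  refine Lp.ext ?_
  filter_upwards [coeFn_mul2 (Lp.const ∞ hm (1 : ℂ)) x, Lp.coeFn_const ∞ hm (1 : ℂ)] with t h1 h2
  rw [ContinuousLinearMap.id_apply, h1, h2, Function.const_apply, one_mul]

lemma mul2_sub (a b : Lp ℂ ∞ hm) : mul2 (a - b) = mul2 a - mul2 b := by
  ext1 x
  refine Lp.ext ?_
  filter_upwards [coeFn_mul2 (a - b) x, coeFn_mul2 a x, coeFn_mul2 b x, Lp.coeFn_sub a b,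
    Lp.coeFn_sub (mul2 a x) (mul2 b x)] with t h1 h2 h3 h4 h5
  rw [sub_apply, h5, Pi.sub_apply, h1, h2, h3, h4, Pi.sub_apply, sub_mul]

lemma norm_mul2_le (a : Lp ℂ ∞ hm) : ‖mul2 a‖ ≤ ‖a‖ :=
  LinearMap.mkContinuous_norm_le _ (norm_nonneg a) _

lemma inner_mul2_conjInf_left (χ : Lp ℂ ∞ hm) (x y : Lp ℂ 2 hm) :
    inner ℂ (mul2 (conjInf χ) x) y = inner ℂ x (mul2 χ y) := by
  rw [L2.inner_def, L2.inner_def]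
  refine integral_congr_ae ?_
  filter_upwards [coeFn_mul2 (conjInf χ) x, coeFn_mul2 χ y, coeFn_conjInf χ] with t h1 h2 h3
  simp only [h1, h2, h3, RCLike.inner_apply, map_mul, Complex.conj_conj]
  ring

lemma adjoint_mul2 (χ : Lp ℂ ∞ hm) : (mul2 χ).adjoint = mul2 (conjInf χ) :=
  ((ContinuousLinearMap.eq_adjoint_iff _ _).mpr (inner_mul2_conjInf_left χ)).symm

lemma hat2_mul2_fourierLp (χ : Lp ℂ ∞ hm) (k n : ℤ) :
    hat2 (mul2 χ (fourierLp 2 k)) n = hatInf χ (n - k) := by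
  have hae : ⇑(mul2 χ (fourierLp 2 k)) =ᵐ[hm] fun t => fourier k t * χ t := by
    filter_upwards [coeFn_mul2 χ (fourierLp 2 k), coeFn_fourierLp (T := 2 * Real.pi) 2 k]
      with t h1 h2
    rw [h1, h2, mul_comm]
  rw [hat2, fourierBasis_repr, fourierCoeff_hm_congr hae, hatInf, fourierCoeff, fourierCoeff]
  congr 1 with t
  rw [smul_eq_mul, smul_eq_mul, ← mul_assoc, ← fourier_add, neg_sub, sub_eq_neg_add]

lemma hat2_mul2 (χ : Lp ℂ ∞ hm) (f : Lp ℂ 2 hm) (n : ℤ) :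
    hat2 (mul2 χ f) n = ∑' k : ℤ, hatInf χ (n - k) * hat2 f k := by
  simp only [hat2_eq_inner, coe_fourierBasis]
  rw [← inner_mul2_conjInf_left,
    ← fourierBasis.tsum_inner_mul_inner (mul2 (conjInf χ) (fourierLp 2 n)) f]
  congr 1 with k
  rw [coe_fourierBasis, inner_mul2_conjInf_left, ← hat2_mul2_fourierLp, hat2_eq_inner,
    coe_fourierBasis]

end Multiplication

section Invariance

open Module End

lemma hat2_mul2_eq_sum_Icc {χ : Lp ℂ ∞ hm} (hχ : ∀ n < 0, hatInf χ n = 0) {f : Lp ℂ 2 hm}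
    (hf : ∀ n < 0, hat2 f n = 0) (n : ℤ) :
    hat2 (mul2 χ f) n = ∑ k ∈ Finset.Icc 0 n, hatInf χ (n - k) * hat2 f k := by
  rw [hat2_mul2, tsum_eq_sum]
  intro k hk
  rcases not_and_or.mp (Finset.mem_Icc.not.mp hk) with hk | hk
  · rw [hf k (not_le.mp hk), mul_zero]
  · rw [hχ (n - k) (by omega), zero_mul]

lemma HardyA_mem_invtSubmodule_mul2 {χ : Lp ℂ ∞ hm} (hχ : χ ∈ NeilSet) (α : ℂ × ℂ) :
    HardyA α ∈ invtSubmodule (mul2 χ).toLinearMap := by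
  rw [mem_invtSubmodule_iff_forall_mem_of_mem]
  rintro f ⟨hf, hf01⟩
  change mul2 χ f ∈ HardyA α
  obtain ⟨hχ, hχ1⟩ := hχ
  have hsum := hat2_mul2_eq_sum_Icc hχ hf
  have h0 : hat2 (mul2 χ f) 0 = hatInf χ 0 * hat2 f 0 := by simp [hsum]
  have h1 : hat2 (mul2 χ f) 1 = hatInf χ 0 * hat2 f 1 := by
    rw [hsum, show Finset.Icc (0 : ℤ) 1 = {0, 1} by rfl, Finset.sum_pair zero_ne_one]
    simp [hχ1]
  refine ⟨fun n hn => by rw [hsum, Finset.Icc_eq_empty (by omega), Finset.sum_empty], ?_⟩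
  rw [h0, h1, mul_left_comm, hf01, mul_left_comm]

lemma orthogonal_HardyA_mem_invtSubmodule_mul2_conjInf {χ : Lp ℂ ∞ hm} (hχ : χ ∈ NeilSet)
    (α : ℂ × ℂ) : (HardyA α)ᗮ ∈ invtSubmodule (mul2 (conjInf χ)).toLinearMap := by
  apply ContinuousLinearMap.orthogonal_mem_invtSubmodule
  rw [← adjoint_mul2, ContinuousLinearMap.adjoint_adjoint]
  exact HardyA_mem_invtSubmodule_mul2 hχ α

end Invariance

section Toeplitz

variable (α : ℂ × ℂ)

lemma toeplitz_eq_compression (a : Lp ℂ ∞ hm) : Toeplitz α a = (HardyA α).compression (mul2 a) :=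
  rfl

lemma toeplitz_const_one : Toeplitz α (Lp.const ∞ hm (1 : ℂ)) = 1 := by
  rw [toeplitz_eq_compression, mul2_const_one, Submodule.compression_id]
  rfl

lemma toeplitz_sub (a b : Lp ℂ ∞ hm) : Toeplitz α (a - b) = Toeplitz α a - Toeplitz α b := by
  simp only [toeplitz_eq_compression, mul2_sub, Submodule.compression_sub]

lemma norm_toeplitz_le (a : Lp ℂ ∞ hm) : ‖Toeplitz α a‖ ≤ ‖a‖ :=
  ((HardyA α).norm_compression_le _).trans (norm_mul2_le a)

lemma toeplitz_mul_toeplitz_of_mem_neilSet (a : Lp ℂ ∞ hm) {χ : Lp ℂ ∞ hm} (hχ : χ ∈ NeilSet) :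
    Toeplitz α a * Toeplitz α χ = Toeplitz α (mulInf a χ) := by
  simp only [toeplitz_eq_compression, ← mul2_comp_mul2]
  exact (HardyA α).compression_comp_of_mem_invtSubmodule (HardyA_mem_invtSubmodule_mul2 hχ α) _

lemma toeplitz_conjInf_mul_toeplitz {χ : Lp ℂ ∞ hm} (hχ : χ ∈ NeilSet) (b : Lp ℂ ∞ hm) :
    Toeplitz α (conjInf χ) * Toeplitz α b = Toeplitz α (mulInf (conjInf χ) b) := by
  simp only [toeplitz_eq_compression, ← mul2_comp_mul2]
  exact (HardyA α).compression_comp_of_orthogonal_mem_invtSubmodule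
    (orthogonal_HardyA_mem_invtSubmodule_mul2_conjInf hχ α) _

lemma isUnit_toeplitz_of_norm_sub_lt_one {a : Lp ℂ ∞ hm}
    (ha : ‖Lp.const ∞ hm (1 : ℂ) - a‖ < 1) : IsUnit (Toeplitz α a) := by
  have h := isUnit_one_sub_of_norm_lt_one (R := HardyA α →L[ℂ] HardyA α)
    ((norm_toeplitz_le α _).trans_lt ha)
  rwa [toeplitz_sub, toeplitz_const_one, sub_sub_cancel] at h

end Toeplitz

section Symbols

open ComplexConjugate

lemma Complex.norm_one_sub_conj_mul {u : ℂ} (hu : ‖u‖ = 1) (v : ℂ) :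
    ‖1 - conj u * v‖ = ‖u - v‖ := by
  calc ‖1 - conj u * v‖ = ‖conj u * (u - v)‖ := by
        rw [mul_sub, conj_mul', hu, ofReal_one, one_pow]
    _ = ‖u - v‖ := by rw [norm_mul, norm_conj, hu, one_mul]

lemma Complex.norm_one_sub_conj_mul' {u : ℂ} (hu : ‖u‖ = 1) (v : ℂ) :
    ‖1 - conj v * u‖ = ‖u - v‖ := by
  rw [← norm_conj, map_sub, map_one, map_mul, conj_conj, mul_comm, norm_one_sub_conj_mul hu]

lemma norm_const_one_sub_mulInf_le {a b g : Lp ℂ ∞ hm}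
    (h : ∀ᵐ t ∂hm, ‖1 - a t * b t‖ ≤ ‖g t‖) : ‖Lp.const ∞ hm (1 : ℂ) - mulInf a b‖ ≤ ‖g‖ := by
  refine Lp.norm_le_norm_of_ae_le ?_
  filter_upwards [h, Lp.coeFn_sub (Lp.const ∞ hm (1 : ℂ)) (mulInf a b), coeFn_mulInf a b,
    Lp.coeFn_const ∞ hm (1 : ℂ)] with t ht h1 h2 h3
  rwa [h1, Pi.sub_apply, h2, h3, Function.const_apply]

lemma Unimodular.norm_const_one_sub_conjInf_mulInf_le {φ : Lp ℂ ∞ hm} (hφ : Unimodular φ)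
    (ψ : Lp ℂ ∞ hm) : ‖Lp.const ∞ hm (1 : ℂ) - mulInf (conjInf φ) ψ‖ ≤ ‖φ - ψ‖ := by
  refine norm_const_one_sub_mulInf_le ?_
  filter_upwards [hφ, coeFn_conjInf φ, Lp.coeFn_sub φ ψ] with t hφt h1 h2
  rw [h1, h2, Pi.sub_apply, norm_one_sub_conj_mul hφt]

lemma Unimodular.norm_const_one_sub_conjInf_mulInf_le' {φ : Lp ℂ ∞ hm} (hφ : Unimodular φ)
    (ψ : Lp ℂ ∞ hm) : ‖Lp.const ∞ hm (1 : ℂ) - mulInf (conjInf ψ) φ‖ ≤ ‖φ - ψ‖ := by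
  refine norm_const_one_sub_mulInf_le ?_
  filter_upwards [hφ, coeFn_conjInf ψ, Lp.coeFn_sub φ ψ] with t hφt h1 h2
  rw [h1, h2, Pi.sub_apply, norm_one_sub_conj_mul' hφt]

lemma conjInf_mulInf (a b : Lp ℂ ∞ hm) :
    conjInf (mulInf a b) = mulInf (conjInf a) (conjInf b) := by
  refine Lp.ext ?_
  filter_upwards [coeFn_mulInf (conjInf a) (conjInf b), coeFn_conjInf a, coeFn_conjInf b,
    coeFn_conjInf (mulInf a b), coeFn_mulInf a b] with t h1 h2 h3 h4 h5
  rw [h1, h2, h3, h4, h5, map_mul]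

lemma conjInf_const_one : conjInf (Lp.const ∞ hm (1 : ℂ)) = Lp.const ∞ hm (1 : ℂ) := by
  refine Lp.ext ?_
  filter_upwards [coeFn_conjInf (Lp.const ∞ hm (1 : ℂ)), Lp.coeFn_const ∞ hm (1 : ℂ)] with t h1 h2
  rw [h1, h2, Function.const_apply, map_one]

lemma mulInf_comm (a b : Lp ℂ ∞ hm) : mulInf a b = mulInf b a := by
  refine Lp.ext ?_
  filter_upwards [coeFn_mulInf a b, coeFn_mulInf b a] with t h1 h2
  rw [h1, h2, mul_comm]

end Symbols

lemma isUnit_toeplitz_conjInf_of_neilInvertible {ψ : Lp ℂ ∞ hm} (hψ : NeilInvertible ψ)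
    (α : ℂ × ℂ) : IsUnit (Toeplitz α (conjInf ψ)) := by
  obtain ⟨hψ, χ, hχ, hψχ⟩ := hψ
  have hψχ' : mulInf (conjInf ψ) (conjInf χ) = Lp.const ∞ hm (1 : ℂ) := by
    rw [← conjInf_mulInf, hψχ, conjInf_const_one]
  have hχψ' : mulInf (conjInf χ) (conjInf ψ) = Lp.const ∞ hm (1 : ℂ) := by
    rw [← conjInf_mulInf, mulInf_comm, hψχ, conjInf_const_one]
  refine ⟨⟨Toeplitz α (conjInf ψ), Toeplitz α (conjInf χ), ?_, ?_⟩, rfl⟩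
  · rw [toeplitz_conjInf_mul_toeplitz α hψ, hψχ', toeplitz_const_one]
  · rw [toeplitz_conjInf_mul_toeplitz α hχ, hχψ', toeplitz_const_one]

lemma invertibleOp_iff_isUnit {E : Type*} [NormedAddCommGroup E] [NormedSpace ℂ E]
    (T : E →L[ℂ] E) : InvertibleOp T ↔ IsUnit T :=
  ⟨fun ⟨S, hST, hTS⟩ => ⟨⟨T, S, hTS, hST⟩, rfl⟩,
    fun ⟨u, hu⟩ => hu ▸ ⟨↑u⁻¹, u.inv_mul, u.mul_inv⟩⟩

lemma LeftInvertible.of_isUnit_mul {E : Type*} [NormedAddCommGroup E] [NormedSpace ℂ E]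
    {S T : E →L[ℂ] E} (h : IsUnit (S * T)) : LeftInvertible T :=
  ⟨↑h.unit⁻¹ * S, by rw [← ContinuousLinearMap.mul_def, mul_assoc]; exact h.val_inv_mul⟩

/-- If `φ` is unimodular and `‖φ - ψ‖_∞ < 1` for some `ψ ∈ 𝔄`, then `T^α_{conj φ} T^α_ψ`
is invertible and `T^α_φ` is left invertible, for every `α ∈ 𝔹²`; if moreover `ψ` is
invertible in `𝔄`, then `T^α_{conj ψ} T^α_φ` and `T^α_φ` are invertible. -/
theorem left_invertible_of_dist_lt_one (φ ψ : Lp ℂ ∞ hm) (hφ : Unimodular φ)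
    (hψ : ψ ∈ NeilSet) (hdist : ‖φ - ψ‖ < 1) :
    (∀ α ∈ B2,
      InvertibleOp ((Toeplitz α (conjInf φ)) ∘L (Toeplitz α ψ)) ∧
      LeftInvertible (Toeplitz α φ)) ∧
    (NeilInvertible ψ → ∀ α ∈ B2,
      InvertibleOp ((Toeplitz α (conjInf ψ)) ∘L (Toeplitz α φ)) ∧
      InvertibleOp (Toeplitz α φ)) := by
  have hA (α : ℂ × ℂ) : IsUnit (Toeplitz α (conjInf φ) * Toeplitz α ψ) := by
    rw [toeplitz_mul_toeplitz_of_mem_neilSet α _ hψ]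
    exact isUnit_toeplitz_of_norm_sub_lt_one α
      ((hφ.norm_const_one_sub_conjInf_mulInf_le ψ).trans_lt hdist)
  have hB (α : ℂ × ℂ) : IsUnit (Toeplitz α (conjInf ψ) * Toeplitz α φ) := by
    rw [toeplitz_conjInf_mul_toeplitz α hψ]
    exact isUnit_toeplitz_of_norm_sub_lt_one α
      ((hφ.norm_const_one_sub_conjInf_mulInf_le' ψ).trans_lt hdist)
  simp only [invertibleOp_iff_isUnit]
  refine ⟨fun α _ => ⟨hA α, .of_isUnit_mul (hB α)⟩, fun hψinv α _ => ⟨hB α, ?_⟩⟩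
  exact ((isUnit_toeplitz_conjInf_of_neilInvertible hψinv α).unit.isUnit_units_mul _).mp (hB α)

end
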